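/- Let A = k⟨x₁, x₂⟩/(x₁²x₂ − x₂x₁², x₁x₂² − x₂²x₁) over a field k of characteristic 0, and p ∈ k×. Define σ : A → M₂(A) by σ(x₁) = p·[[x₂, x₂],[x₂, −x₂]] and σ(x₂) = p·[[x₁, x₁],[x₁, −x₁]]. Then σ is a well-defined graded algebra homomorphism (it respects the two defining relations of A), and σ is invertible with inverse φ : A → M₂(A) given by φ(x₁) = (2p)^{-1}·[[x₂, x₂],[x₂, −x₂]] and φ(x₂) = (2p)^{-1}·[[x₁, x₁],[x₁, −x₁]], so that Σ_k φ_{jk}∘σ_{ik} = δ_{ij} id. -/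
import Mathlib


/-!
Statement 15: the explicit invertible algebra homomorphism
`σ : A → M₂(A)` for `A = k⟨x₁,x₂⟩/(x₁²x₂ − x₂x₁², x₁x₂² − x₂²x₁)`.
-/

noncomputable section

/-- The defining relations `x₁²x₂ = x₂x₁²` and `x₁x₂² = x₂²x₁` of the algebra `A`
(the generator `x₁` is indexed by `0` and `x₂` by `1`). -/
inductive ttRel (k : Type*) [Field k] :
    FreeAlgebra k (Fin 2) → FreeAlgebra k (Fin 2) → Prop where
  | r1 : ttRel k (FreeAlgebra.ι k 0 * FreeAlgebra.ι k 0 * FreeAlgebra.ι k 1)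
      (FreeAlgebra.ι k 1 * (FreeAlgebra.ι k 0 * FreeAlgebra.ι k 0))
  | r2 : ttRel k (FreeAlgebra.ι k 0 * (FreeAlgebra.ι k 1 * FreeAlgebra.ι k 1))
      (FreeAlgebra.ι k 1 * FreeAlgebra.ι k 1 * FreeAlgebra.ι k 0)

/-- The algebra `A = k⟨x₁,x₂⟩/(x₁²x₂ − x₂x₁², x₁x₂² − x₂²x₁)`. -/
abbrev TTAlg (k : Type*) [Field k] := RingQuot (ttRel k)

/-- The generators `x₁, x₂` of `A`. -/
def ttGen (k : Type*) [Field k] (i : Fin 2) : TTAlg k :=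
  RingQuot.mkAlgHom k (ttRel k) (FreeAlgebra.ι k i)

/-- `φ` is an inverse of `σ : A → M₂(A)`. -/
def IsMatInverse {k : Type*} [Field k] {A : Type*} [Ring A] [Algebra k A]
    (σ φ : A →ₐ[k] Matrix (Fin 2) (Fin 2) A) : Prop :=
  (∀ (a : A) (i j : Fin 2), (∑ t, φ (σ a i t) j t) = if i = j then a else 0) ∧
  (∀ (a : A) (i j : Fin 2), (∑ t, σ (φ a t i) t j) = if i = j then a else 0)


private def mM {A : Type*} [Ring A] (a : A) : Matrix (Fin 2) (Fin 2) A :=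
  !![a, a; a, -a]

private lemma mM_mul {A : Type*} [Ring A] (a b : A) :
    mM a * mM b = !![a*b + a*b, 0; 0, a*b + a*b] := by
  simp [mM, Matrix.mul_fin_two]

private lemma mM_rel {A : Type*} [Ring A] (a b : A) (h : a * a * b = b * (a * a)) :
    mM a * mM a * mM b = mM b * (mM a * mM a) := by
  rw [mM_mul a a]
  have h2 : (a*a + a*a) * b = b * (a*a + a*a) := by rw [add_mul, mul_add, h]
  simp [mM, Matrix.mul_fin_two, h2]

private lemma mM_rel' {A : Type*} [Ring A] (a b : A) (h : a * (b * b) = b * b * a) :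
    mM a * (mM b * mM b) = mM b * mM b * mM a := by
  rw [mM_mul b b]
  have h2 : a * (b*b + b*b) = (b*b + b*b) * a := by rw [add_mul, mul_add, h]
  simp [mM, Matrix.mul_fin_two, h2]

section Aux
variable {k : Type*} [Field k]

private lemma tt_rel1 :
    ttGen k 0 * ttGen k 0 * ttGen k 1 = ttGen k 1 * (ttGen k 0 * ttGen k 0) := by
  have := RingQuot.mkAlgHom_rel k (ttRel.r1 (k := k))
  simpa [ttGen, map_mul] using this

private lemma tt_rel2 :
    ttGen k 0 * (ttGen k 1 * ttGen k 1) = ttGen k 1 * ttGen k 1 * ttGen k 0 := by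
  have := RingQuot.mkAlgHom_rel k (ttRel.r2 (k := k))
  simpa [ttGen, map_mul] using this

private lemma smul3 (p : k) (x y z : TTAlg k) :
    (p • x) * (p • y) * (p • z) = (p*p*p) • (x * y * z) := by
  simp [smul_mul_assoc, mul_smul_comm, smul_smul, mul_comm, mul_assoc, mul_left_comm]

private def ttScaled (p : k) : Fin 2 → Matrix (Fin 2) (Fin 2) (TTAlg k) :=
  ![mM (p • ttGen k 1), mM (p • ttGen k 0)]

private lemma ttScaled_rel (p : k) ⦃x y : FreeAlgebra k (Fin 2)⦄ (h : ttRel k x y) :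
    FreeAlgebra.lift k (ttScaled p) x = FreeAlgebra.lift k (ttScaled p) y := by
  induction h with
  | r1 =>
    simp only [map_mul, FreeAlgebra.lift_ι_apply, ttScaled, Matrix.cons_val_zero,
      Matrix.cons_val_one, Matrix.head_cons]
    refine mM_rel _ _ ?_
    rw [smul3, show (p • ttGen k 0) * ((p • ttGen k 1) * (p • ttGen k 1))
        = (p*p*p) • (ttGen k 0 * (ttGen k 1 * ttGen k 1)) by
      rw [← mul_assoc, smul3]; congr 1; rw [mul_assoc], tt_rel2]
  | r2 =>
    simp only [map_mul, FreeAlgebra.lift_ι_apply, ttScaled, Matrix.cons_val_zero,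
      Matrix.cons_val_one, Matrix.head_cons]
    refine mM_rel' _ _ ?_
    rw [show (p • ttGen k 1) * ((p • ttGen k 0) * (p • ttGen k 0))
        = (p*p*p) • (ttGen k 1 * (ttGen k 0 * ttGen k 0)) by
      rw [← mul_assoc, smul3]; congr 1; rw [mul_assoc],
      smul3, tt_rel1]

private def ttHom (p : k) : TTAlg k →ₐ[k] Matrix (Fin 2) (Fin 2) (TTAlg k) :=
  RingQuot.liftAlgHom k (s := ttRel k) ⟨FreeAlgebra.lift k (ttScaled p), ttScaled_rel p⟩

private lemma ttHom_gen (p : k) (i : Fin 2) :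
    ttHom p (ttGen k i) = ttScaled p i := by
  rw [ttGen, ttHom, RingQuot.liftAlgHom_mkAlgHom_apply, FreeAlgebra.lift_ι_apply]

private lemma cond1_mul {A : Type*} [Ring A] [Algebra k A]
    (σ φ : A →ₐ[k] Matrix (Fin 2) (Fin 2) A) {a b : A}
    (ha : ∀ i j, (∑ t, φ (σ a i t) j t) = if i = j then a else 0)
    (hb : ∀ i j, (∑ t, φ (σ b i t) j t) = if i = j then b else 0) :
    ∀ i j, (∑ t, φ (σ (a * b) i t) j t) = if i = j then a * b else 0 := by
  intro i j
  have expand : ∀ t, φ (σ (a * b) i t) j t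
      = ∑ u, ∑ v, φ (σ a i u) j v * φ (σ b u t) v t := by
    intro t
    rw [map_mul, Matrix.mul_apply, map_sum, Matrix.sum_apply]
    exact Finset.sum_congr rfl fun u _ => by rw [map_mul, Matrix.mul_apply]
  calc (∑ t, φ (σ (a * b) i t) j t)
      = ∑ t, ∑ u, ∑ v, φ (σ a i u) j v * φ (σ b u t) v t :=
        Finset.sum_congr rfl fun t _ => expand t
    _ = ∑ u, ∑ v, ∑ t, φ (σ a i u) j v * φ (σ b u t) v t := by
        rw [Finset.sum_comm]
        exact Finset.sum_congr rfl fun u _ => Finset.sum_comm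
    _ = ∑ u, ∑ v, φ (σ a i u) j v * ∑ t, φ (σ b u t) v t :=
        Finset.sum_congr rfl fun u _ => Finset.sum_congr rfl fun v _ =>
          (Finset.mul_sum _ _ _).symm
    _ = ∑ u, ∑ v, φ (σ a i u) j v * (if u = v then b else 0) := by
        simp only [hb]
    _ = ∑ u, φ (σ a i u) j u * b := by
        refine Finset.sum_congr rfl fun u _ => ?_
        simp [mul_ite]
    _ = (∑ u, φ (σ a i u) j u) * b := by rw [Finset.sum_mul]
    _ = (if i = j then a else 0) * b := by rw [ha]
    _ = if i = j then a * b else 0 := by simp [ite_mul]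

private lemma cond2_mul {A : Type*} [Ring A] [Algebra k A]
    (σ φ : A →ₐ[k] Matrix (Fin 2) (Fin 2) A) {a b : A}
    (ha : ∀ i j, (∑ t, σ (φ a t i) t j) = if i = j then a else 0)
    (hb : ∀ i j, (∑ t, σ (φ b t i) t j) = if i = j then b else 0) :
    ∀ i j, (∑ t, σ (φ (a * b) t i) t j) = if i = j then a * b else 0 := by
  intro i j
  have expand : ∀ t, σ (φ (a * b) t i) t j
      = ∑ u, ∑ v, σ (φ a t u) t v * σ (φ b u i) v j := by
    intro t
    rw [map_mul, Matrix.mul_apply, map_sum, Matrix.sum_apply]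
    exact Finset.sum_congr rfl fun u _ => by rw [map_mul, Matrix.mul_apply]
  calc (∑ t, σ (φ (a * b) t i) t j)
      = ∑ t, ∑ u, ∑ v, σ (φ a t u) t v * σ (φ b u i) v j :=
        Finset.sum_congr rfl fun t _ => expand t
    _ = ∑ u, ∑ v, ∑ t, σ (φ a t u) t v * σ (φ b u i) v j := by
        rw [Finset.sum_comm]
        exact Finset.sum_congr rfl fun u _ => Finset.sum_comm
    _ = ∑ u, ∑ v, (∑ t, σ (φ a t u) t v) * σ (φ b u i) v j :=
        Finset.sum_congr rfl fun u _ => Finset.sum_congr rfl fun v _ =>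
          (Finset.sum_mul _ _ _).symm
    _ = ∑ u, ∑ v, (if u = v then a else 0) * σ (φ b u i) v j := by
        simp only [ha]
    _ = ∑ u, a * σ (φ b u i) u j := by
        refine Finset.sum_congr rfl fun u _ => ?_
        simp [ite_mul]
    _ = a * ∑ u, σ (φ b u i) u j := by rw [Finset.mul_sum]
    _ = a * (if i = j then b else 0) := by rw [hb]
    _ = if i = j then a * b else 0 := by simp [mul_ite]

private lemma cond_algebraMap {A : Type*} [Ring A] [Algebra k A]
    (σ φ : A →ₐ[k] Matrix (Fin 2) (Fin 2) A) (r : k) :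
    ∀ i j, (∑ t, φ (σ ((algebraMap k A) r) i t) j t)
      = if i = j then (algebraMap k A) r else 0 := by
  intro i j
  rw [AlgHom.commutes]
  fin_cases i <;> fin_cases j <;>
    simp [Fin.sum_univ_two, Matrix.algebraMap_matrix_apply, apply_ite φ,
      AlgHom.commutes]

private lemma ttHom_gen_cond1 (p q : k) (h2 : p * q + p * q = 1) (g : Fin 2) :
    ∀ i j, (∑ t, (ttHom q) ((ttHom p) (ttGen k g) i t) j t)
      = if i = j then ttGen k g else 0 := by
  intro i j
  fin_cases g <;> fin_cases i <;> fin_cases j <;>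
    simp [Fin.sum_univ_two, ttHom_gen, ttScaled, mM, map_smul,
      Matrix.smul_apply, Matrix.neg_apply, smul_smul] <;>
    rw [← add_smul, h2, one_smul]

private lemma ttHom_gen_cond2 (p q : k) (h2 : q * p + q * p = 1) (g : Fin 2) :
    ∀ i j, (∑ t, (ttHom p) ((ttHom q) (ttGen k g) t i) t j)
      = if i = j then ttGen k g else 0 := by
  intro i j
  fin_cases g <;> fin_cases i <;> fin_cases j <;>
    simp [Fin.sum_univ_two, ttHom_gen, ttScaled, mM, map_smul,
      Matrix.smul_apply, Matrix.neg_apply, smul_smul] <;>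
    first
      | rw [← add_smul, h2, one_smul]
      | rw [two_mul, smul_add, ← add_smul, h2, one_smul]

private lemma ttHom_inv (p q : k) (h2 : p * q + p * q = 1) :
    IsMatInverse (ttHom p) (ttHom q) := by
  constructor
  · intro a
    obtain ⟨f, rfl⟩ := RingQuot.mkAlgHom_surjective k (ttRel k) a
    induction f using FreeAlgebra.induction with
    | grade0 r =>
      rw [AlgHom.commutes]
      exact cond_algebraMap _ _ r
    | grade1 g =>
      exact ttHom_gen_cond1 p q h2 g
    | mul x y hx hy =>
      rw [map_mul]
      exact cond1_mul _ _ hx hy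
    | add x y hx hy =>
      intro i j
      rw [map_add]
      simp only [map_add, Matrix.add_apply, Finset.sum_add_distrib, hx, hy]
      split <;> simp
  · intro a
    obtain ⟨f, rfl⟩ := RingQuot.mkAlgHom_surjective k (ttRel k) a
    induction f using FreeAlgebra.induction with
    | grade0 r =>
      intro i j
      rw [AlgHom.commutes, AlgHom.commutes]
      fin_cases i <;> fin_cases j <;>
        simp [Fin.sum_univ_two, Matrix.algebraMap_matrix_apply,
          apply_ite (ttHom p), AlgHom.commutes]
    | grade1 g =>
      exact ttHom_gen_cond2 p q (by rwa [mul_comm]) g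
    | mul x y hx hy =>
      rw [map_mul]
      exact cond2_mul _ _ hx hy
    | add x y hx hy =>
      intro i j
      rw [map_add]
      simp only [map_add, Matrix.add_apply, Finset.sum_add_distrib, hx, hy]
      split <;> simp

end Aux

/-- Over a field `k` of characteristic `0` and for `p ≠ 0`, the
assignment `σ(x₁) = p·[[x₂,x₂],[x₂,−x₂]]`, `σ(x₂) = p·[[x₁,x₁],[x₁,−x₁]]` defines a
well-defined algebra homomorphism `σ : A → M₂(A)` (it respects the two defining
relations of `A`), and `σ` is invertible, with inverse `φ` given by the `(2p)⁻¹`-scaled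
matrices of the same shape. -/
theorem example_sigma_welldefined_invertible
    (k : Type*) [Field k] [CharZero k] (p : k) (hp : p ≠ 0) :
    ∃ σ : TTAlg k →ₐ[k] Matrix (Fin 2) (Fin 2) (TTAlg k),
      σ (ttGen k 0) = !![p • ttGen k 1, p • ttGen k 1;
                         p • ttGen k 1, -(p • ttGen k 1)] ∧
      σ (ttGen k 1) = !![p • ttGen k 0, p • ttGen k 0;
                         p • ttGen k 0, -(p • ttGen k 0)] ∧
      ∃ φ : TTAlg k →ₐ[k] Matrix (Fin 2) (Fin 2) (TTAlg k),
        φ (ttGen k 0) = (2 * p)⁻¹ • !![ttGen k 1, ttGen k 1;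
                                        ttGen k 1, -(ttGen k 1)] ∧
        φ (ttGen k 1) = (2 * p)⁻¹ • !![ttGen k 0, ttGen k 0;
                                        ttGen k 0, -(ttGen k 0)] ∧
        IsMatInverse σ φ := by
  have h2 : (2 : k) ≠ 0 := two_ne_zero
  have hpq : p * (2 * p)⁻¹ + p * (2 * p)⁻¹ = 1 := by
    field_simp
    ring
  refine ⟨ttHom p, ?_, ?_, ttHom (2 * p)⁻¹, ?_, ?_, ttHom_inv p (2 * p)⁻¹ hpq⟩
  · rw [ttHom_gen]; rfl
  · rw [ttHom_gen]; rfl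
  · rw [ttHom_gen]
    ext i j
    fin_cases i <;> fin_cases j <;> simp [ttScaled, mM]
  · rw [ttHom_gen]
    ext i j
    fin_cases i <;> fin_cases j <;> simp [ttScaled, mM]


end
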